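/- arXiv:2007.16157 — 2 statements merged into one kernel-verified Lean document; each statement's English description precedes it below -/
import Mathlib

section
/- For a sequence of real numbers (a_j) and s ≥ 0, the condition lim_{δ↓0} limsup_{N→∞} (#{j < N : |a_j| > δ j^{-s}})/N = 0 holds if and only if there exists a strictly increasing subsequence of indices (j_k) such that a_{j_k} = o(j_k^{-s}) as k → ∞ and j_k / k → 1 as k → ∞. -/
/-!
The densities in the statement are antitone in `δ`, so their limsups tend to `0` as `δ ↓ 0` iff
every exceptional set `{j : δ < |a j| j^s}` has natural density zero, i.e. `|a j| j^s` converges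
statistically to `0`. A diagonal argument turns this into convergence along a single set of
density one: choose thresholds beyond which the exceptional sets for `δ = 1/(i+1)` are sparse and
let `i` grow slowly with `j`. Finally, a set has density one iff its increasing enumeration `j_k`
satisfies `j_k / k → 1`, because the counting function inverts the enumeration.
-/

open Filter Finset Topology
open scoped Classical

/-- Decidability is classical here, so the notion does not depend on an instance;
`hasNatDensity_iff` unfolds it for any given one. -/
noncomputable def HasNatDensity (p : ℕ → Prop) (d : ℝ) : Prop :=
  Tendsto (fun n : ℕ => (Nat.count p n : ℝ) / n) atTop (𝓝 d)

section NatDensity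

variable {p q : ℕ → Prop} {d : ℝ}

theorem hasNatDensity_iff [DecidablePred p] :
    HasNatDensity p d ↔ Tendsto (fun n : ℕ => (Nat.count p n : ℝ) / n) atTop (𝓝 d) := by
  unfold HasNatDensity
  congr!

theorem HasNatDensity.mono (hp : HasNatDensity p 0) (hqp : ∀ m, q m → p m) :
    HasNatDensity q 0 := by
  rw [hasNatDensity_iff] at hp ⊢
  exact squeeze_zero (fun n => by positivity) (fun n => div_le_div_of_nonneg_right
    (by exact_mod_cast Nat.count_mono_left fun m _ => hqp m) n.cast_nonneg) hp

theorem hasNatDensity_zero_of_finite (hp : (Set.ofPred p).Finite) : HasNatDensity p 0 := by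
  rw [hasNatDensity_iff]
  exact squeeze_zero (fun n => by positivity)
    (fun n => div_le_div_of_nonneg_right (b := (#hp.toFinset : ℝ))
      (by exact_mod_cast Nat.count_le_card hp n) n.cast_nonneg)
    (tendsto_const_div_atTop_nhds_zero_nat _)

theorem HasNatDensity.or (hp : HasNatDensity p 0) (hq : HasNatDensity q 0) :
    HasNatDensity (fun m => p m ∨ q m) 0 := by
  rw [hasNatDensity_iff] at hp hq ⊢
  have hcount (n : ℕ) : Nat.count (fun m => p m ∨ q m) n ≤ Nat.count p n + Nat.count q n := by
    simp only [Nat.count_eq_card_filter_range, filter_or]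
    exact card_union_le _ _
  refine squeeze_zero (fun n => by positivity) (fun n => ?_) (by simpa using hp.add hq)
  rw [← add_div]
  exact div_le_div_of_nonneg_right (by exact_mod_cast hcount n) n.cast_nonneg

theorem HasNatDensity.not (hp : HasNatDensity p d) : HasNatDensity (fun m => ¬p m) (1 - d) := by
  rw [hasNatDensity_iff] at hp ⊢
  have hsplit (n : ℕ) : Nat.count p n + Nat.count (fun m => ¬p m) n = n := by
    simp only [Nat.count_eq_card_filter_range]
    rw [card_filter_add_card_filter_not, card_range]
  refine ((tendsto_const_nhds (x := (1 : ℝ))).sub hp).congr' ?_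
  filter_upwards [eventually_gt_atTop 0] with n hn
  rw [sub_eq_iff_eq_add, ← add_div, eq_div_iff (by positivity), one_mul]
  exact_mod_cast ((add_comm _ _).trans (hsplit n)).symm

theorem HasNatDensity.and (hp : HasNatDensity p 1) (hq : HasNatDensity q 1) :
    HasNatDensity (fun m => p m ∧ q m) 1 := by
  have hnp : HasNatDensity (fun m => ¬p m) 0 := by simpa using hp.not
  have hnq : HasNatDensity (fun m => ¬q m) 0 := by simpa using hq.not
  have h : HasNatDensity (fun m => ¬(p m ∧ q m)) 0 :=
    (hnp.or hnq).mono fun m hm => not_and_or.1 hm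
  simpa using h.not

theorem hasNatDensity_const_le (n₀ : ℕ) : HasNatDensity (n₀ ≤ ·) 1 := by
  simpa using (hasNatDensity_zero_of_finite (Set.finite_lt_nat n₀)).not

theorem HasNatDensity.infinite (hp : HasNatDensity p d) (hd : d ≠ 0) :
    (Set.ofPred p).Infinite :=
  fun hfin => hd (tendsto_nhds_unique hp (hasNatDensity_zero_of_finite hfin))

theorem tendsto_count_atTop [DecidablePred p] (hp : (Set.ofPred p).Infinite) :
    Tendsto (Nat.count p) atTop atTop :=
  (Nat.count_monotone p).tendsto_atTop_atTop fun k =>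
    ⟨Nat.nth p k, (Nat.count_nth_of_infinite hp k).ge⟩

theorem tendsto_div_nth_iff :
    Tendsto (fun k : ℕ => (k : ℝ) / Nat.nth p k) atTop (𝓝 1) ↔
      Tendsto (fun k : ℕ => (Nat.nth p k : ℝ) / k) atTop (𝓝 1) := by
  constructor <;> intro h <;> simpa only [inv_div, inv_one] using h.inv₀ one_ne_zero

theorem HasNatDensity.tendsto_nth_div (hp : HasNatDensity p 1) :
    Tendsto (fun k : ℕ => (Nat.nth p k : ℝ) / k) atTop (𝓝 1) := by
  have hinf := hp.infinite one_ne_zero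
  rw [hasNatDensity_iff] at hp
  rw [← tendsto_div_nth_iff]
  refine (hp.comp (Nat.nth_strictMono hinf).tendsto_atTop).congr fun k => ?_
  simp only [Function.comp_apply, Nat.count_nth_of_infinite hinf]

theorem hasNatDensity_one_of_tendsto_nth_div (hp : (Set.ofPred p).Infinite)
    (h : Tendsto (fun k : ℕ => (Nat.nth p k : ℝ) / k) atTop (𝓝 1)) : HasNatDensity p 1 := by
  rw [← tendsto_div_nth_iff] at h
  rw [hasNatDensity_iff]
  refine tendsto_of_tendsto_of_tendsto_of_le_of_le' (h.comp (tendsto_count_atTop hp))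
    tendsto_const_nhds ?_ ?_
  · filter_upwards [eventually_gt_atTop 0] with n hn
    exact div_le_div_of_nonneg_left (Nat.cast_nonneg _) (by exact_mod_cast hn)
      (by exact_mod_cast Nat.le_nth_count hp n)
  · exact Eventually.of_forall fun n =>
      div_le_one_of_le₀ (by exact_mod_cast Nat.count_le p) n.cast_nonneg

theorem card_filter_Icc_one_add [DecidablePred p] (N : ℕ) :
    #{m ∈ Icc 1 N | p m} + (if p 0 then 1 else 0) = Nat.count p (N + 1) := by
  induction N with
  | zero => simp [Nat.count_one]
  | succ N ih =>
    rw [← insert_Icc_right_eq_Icc_add_one (by omega), filter_insert, Nat.count_succ, ← ih]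
    split_ifs <;> simp_all

theorem hasNatDensity_iff_tendsto_card_filter_Icc [DecidablePred p] :
    HasNatDensity p d ↔
      Tendsto (fun N : ℕ => (#{m ∈ Icc 1 N | p m} : ℝ) / N) atTop (𝓝 d) := by
  have hdist (N : ℕ) :
      dist ((Nat.count p N : ℝ) / N) ((#{m ∈ Icc 1 N | p m} : ℝ) / N) ≤ 1 / N := by
    rw [Real.dist_eq, ← sub_div, abs_div, Nat.abs_cast]
    refine div_le_div_of_nonneg_right ?_ N.cast_nonneg
    have h := card_filter_Icc_one_add (p := p) N
    rw [Nat.count_succ] at h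
    have h1 : (#{m ∈ Icc 1 N | p m} : ℝ) ≤ Nat.count p N + 1 := by
      exact_mod_cast (show _ ≤ _ by split_ifs at h <;> omega)
    have h2 : (Nat.count p N : ℝ) ≤ #{m ∈ Icc 1 N | p m} + 1 := by
      exact_mod_cast (show _ ≤ _ by split_ifs at h <;> omega)
    rw [abs_sub_le_iff]
    constructor <;> linarith
  have hdist_zero := squeeze_zero (fun N => dist_nonneg) hdist tendsto_one_div_atTop_nhds_zero_nat
  rw [hasNatDensity_iff]
  exact ⟨fun h => h.congr_dist hdist_zero,
    fun h => h.congr_dist (by simpa only [dist_comm] using hdist_zero)⟩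

end NatDensity

theorem StrictMono.nth_range {j : ℕ → ℕ} (hj : StrictMono j) :
    Nat.nth (· ∈ Set.range j) = j := by
  have hall (n : ℕ) : ∀ hf : (Set.ofPred (· ∈ Set.range j)).Finite, n < hf.toFinset.card :=
    fun hf => absurd hf (Set.infinite_range_of_injective hj.injective)
  funext n
  refine (Nat.eq_nth_of_strictMonoOn_of_mapsTo_of_surjOn j ?_
    (fun n _ => Set.mem_range_self n) (hj.strictMonoOn _) (hall n)).symm
  rintro _ ⟨k, rfl⟩
  exact ⟨k, hall k, rfl⟩

theorem StrictMono.hasNatDensity_range {j : ℕ → ℕ} (hj : StrictMono j)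
    (h : Tendsto (fun k : ℕ => (j k : ℝ) / k) atTop (𝓝 1)) :
    HasNatDensity (· ∈ Set.range j) 1 :=
  hasNatDensity_one_of_tendsto_nth_div (Set.infinite_range_of_injective hj.injective)
    (by rwa [hj.nth_range])

theorem StrictMono.tendsto_inf_principal_range {α : Type*} {j : ℕ → ℕ} (hj : StrictMono j)
    {x : ℕ → α} {l : Filter α} (hx : Tendsto (x ∘ j) atTop l) :
    Tendsto x (atTop ⊓ 𝓟 (Set.range j)) l := by
  intro U hU
  obtain ⟨K, hK⟩ := eventually_atTop.1 (hx hU)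
  refine mem_inf_of_inter (Ici_mem_atTop (j K)) (mem_principal_self _) ?_
  rintro _ ⟨hm, k, rfl⟩
  exact hK k (hj.le_iff_le.1 hm)

theorem exists_monotone_tendsto_atTop_eventually_le (f : ℕ → ℕ) :
    ∃ L : ℕ → ℕ, Monotone L ∧ Tendsto L atTop atTop ∧
      ∀ᶠ n in atTop, f (L n) ≤ n := by
  refine ⟨fun n => Nat.findGreatest (fun i => ∀ l ≤ i, f l ≤ n) n,
    fun m n hmn => Nat.findGreatest_mono (fun i hi l hl => (hi l hl).trans hmn) hmn, ?_, ?_⟩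
  · refine tendsto_atTop_atTop.2 fun i => ⟨i + ∑ l ∈ range (i + 1), f l, fun n hn => ?_⟩
    refine Nat.le_findGreatest (by omega) fun l hl => ?_
    have := single_le_sum (f := f) (fun _ _ => Nat.zero_le _) (mem_range.2 (by omega : l < i + 1))
    omega
  · filter_upwards [eventually_ge_atTop (f 0)] with n hn
    exact Nat.findGreatest_spec (P := fun i => ∀ l ≤ i, f l ≤ n) (m := 0) (Nat.zero_le n)
      (fun l hl => by rwa [Nat.le_zero.1 hl]) _ le_rfl

theorem exists_tendsto_atTop_hasNatDensity_diag {A : ℕ → ℕ → Prop} (hA : Monotone A)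
    (h : ∀ i, HasNatDensity (A i) 0) :
    ∃ L : ℕ → ℕ, Tendsto L atTop atTop ∧ HasNatDensity (fun m => A (L m) m) 0 := by
  simp only [hasNatDensity_iff] at h ⊢
  have hsmall (i : ℕ) :
      ∀ᶠ n in atTop, (Nat.count (A i) n : ℝ) / n ≤ 1 / ((i : ℝ) + 1) :=
    (h i).eventually (ge_mem_nhds (by positivity))
  choose f hf using fun i => eventually_atTop.1 (hsmall i)
  obtain ⟨L, hLmono, hLtop, hfL⟩ := exists_monotone_tendsto_atTop_eventually_le f
  -- Below `n`, the diagonal set lies inside `A (L n)` (both `L` and `A` are monotone), and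
  -- `A (L n)` is already sparse at `n ≥ f (L n)`.
  refine ⟨L, hLtop, squeeze_zero' (Eventually.of_forall fun n => by positivity) ?_
      (tendsto_one_div_add_atTop_nhds_zero_nat.comp hLtop)⟩
  filter_upwards [hfL] with n hn
  calc (Nat.count (fun m => A (L m) m) n : ℝ) / n ≤ (Nat.count (A (L n)) n : ℝ) / n := by
        refine div_le_div_of_nonneg_right ?_ n.cast_nonneg
        exact_mod_cast Nat.count_mono_left fun m hm hAm => hA (hLmono hm.le) m hAm
    _ ≤ 1 / ((L n : ℝ) + 1) := hf (L n) n hn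

theorem forall_hasNatDensity_lt_norm_iff {E : Type*} [SeminormedAddGroup E] (x : ℕ → E) :
    (∀ ε > 0, HasNatDensity (fun m => ε < ‖x m‖) 0) ↔
      ∃ p : ℕ → Prop, HasNatDensity p 1 ∧
        Tendsto x (atTop ⊓ 𝓟 {m | p m}) (𝓝 0) := by
  constructor
  · intro h
    set A : ℕ → ℕ → Prop := fun i m => 1 / ((i : ℝ) + 1) < ‖x m‖
    have hA : Monotone A := fun i i' hii' m hm => lt_of_le_of_lt (by gcongr) hm
    obtain ⟨L, hLtop, hB⟩ :=
      exists_tendsto_atTop_hasNatDensity_diag hA fun i => h _ (by positivity)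
    refine ⟨fun m => ¬A (L m) m, by simpa only [sub_zero] using hB.not, ?_⟩
    rw [Metric.tendsto_nhds]
    intro ε hε
    obtain ⟨i, hi⟩ := exists_nat_one_div_lt hε
    rw [eventually_inf_principal]
    filter_upwards [hLtop.eventually_ge_atTop i] with m hm hgood
    rw [dist_zero_right]
    exact (not_lt.1 fun hbad => hgood (hA hm m hbad)).trans_lt hi
  · rintro ⟨p, hp, hx⟩ ε hε
    obtain ⟨M, hM⟩ :=
      eventually_atTop.1 (eventually_inf_principal.1 (hx (Metric.ball_mem_nhds 0 hε)))
    have hnp : HasNatDensity (fun m => ¬p m) 0 := by simpa using hp.not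
    refine (hnp.or (hasNatDensity_zero_of_finite (Set.finite_lt_nat M))).mono fun m hm => ?_
    by_contra! hcon
    exact hm.not_gt (mem_ball_zero_iff.1 (hM m hcon.2 hcon.1))

theorem exists_strictMono_tendsto_iff {α : Type*} (x : ℕ → α) (l : Filter α) :
    (∃ p : ℕ → Prop, HasNatDensity p 1 ∧ Tendsto x (atTop ⊓ 𝓟 {m | p m}) l) ↔
      ∃ j : ℕ → ℕ, StrictMono j ∧ (∀ k, 1 ≤ j k) ∧ Tendsto (x ∘ j) atTop l ∧
        Tendsto (fun k : ℕ => (j k : ℝ) / k) atTop (𝓝 1) := by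
  constructor
  · rintro ⟨p, hp, hx⟩
    have hq := hp.and (hasNatDensity_const_le 1)
    have hinf := hq.infinite one_ne_zero
    have hmem (k : ℕ) : p (Nat.nth _ k) ∧ 1 ≤ Nat.nth _ k := Nat.nth_mem_of_infinite hinf k
    refine ⟨Nat.nth _, Nat.nth_strictMono hinf, fun k => (hmem k).2, hx.comp ?_,
      hq.tendsto_nth_div⟩
    exact tendsto_inf.2 ⟨(Nat.nth_strictMono hinf).tendsto_atTop,
      tendsto_principal.2 (Eventually.of_forall fun k => (hmem k).1)⟩
  · rintro ⟨j, hj, -, hxj, hjk⟩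
    exact ⟨(· ∈ Set.range j), hj.hasNatDensity_range hjk, hj.tendsto_inf_principal_range hxj⟩

theorem tendsto_limsup_nhdsGT_zero_iff {u : ℝ → ℕ → ℝ} (hu : Antitone u)
    (hnonneg : ∀ δ N, 0 ≤ u δ N) (hbdd : ∀ δ, IsBoundedUnder (· ≤ ·) atTop (u δ)) :
    Tendsto (fun δ => limsup (u δ) atTop) (𝓝[>] 0) (𝓝 0) ↔
      ∀ δ > 0, Tendsto (u δ) atTop (𝓝 0) := by
  have hbdd' (δ : ℝ) : IsBoundedUnder (· ≥ ·) atTop (u δ) :=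
    isBoundedUnder_of ⟨0, hnonneg δ⟩
  constructor
  · intro h δ hδ
    have hlimsup : limsup (u δ) atTop ≤ 0 := by
      refine ge_of_tendsto h ?_
      filter_upwards [Ioo_mem_nhdsGT hδ] with δ' hδ'
      exact limsup_le_limsup (Eventually.of_forall (hu hδ'.2.le)) (hbdd' δ).isCoboundedUnder_le
        (hbdd δ')
    exact tendsto_of_le_liminf_of_limsup_le
      (le_liminf_of_le (hbdd δ).isCoboundedUnder_ge (Eventually.of_forall (hnonneg δ)))
      hlimsup (hbdd δ) (hbdd' δ)
  · intro h
    refine tendsto_const_nhds.congr' ?_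
    filter_upwards [self_mem_nhdsWithin] with δ hδ
    exact (h δ hδ).limsup_eq.symm

theorem tendsto_limsup_card_filter_iff (b : ℕ → ℝ) :
    Tendsto (fun δ : ℝ => limsup (fun N : ℕ => (#{m ∈ Icc 1 N | δ < b m} : ℝ) / N) atTop)
        (𝓝[>] 0) (𝓝 0) ↔
      ∀ δ > 0, HasNatDensity (fun m => δ < b m) 0 := by
  rw [tendsto_limsup_nhdsGT_zero_iff]
  · simp only [hasNatDensity_iff_tendsto_card_filter_Icc]
  · refine fun δ δ' hδ N =>
      div_le_div_of_nonneg_right (Nat.cast_le.2 (card_le_card ?_)) N.cast_nonneg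
    exact monotone_filter_right _ fun m _ hm => hδ.trans_lt hm
  · exact fun δ N => by positivity
  · refine fun δ => isBoundedUnder_of ⟨1, fun N => div_le_one_of_le₀ ?_ N.cast_nonneg⟩
    exact_mod_cast (card_filter_le _ _).trans (Nat.card_Icc 1 N).le

theorem plasmon_stmt_1_general (a : ℕ → ℝ) (s : ℝ) :
    Filter.Tendsto
        (fun δ : ℝ =>
          Filter.limsup
            (fun N : ℕ =>
              (((Finset.Icc 1 N).filter
                  (fun j : ℕ => δ * (j : ℝ) ^ (-s) < |a j|)).card : ℝ) / N)
            Filter.atTop)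
        (nhdsWithin 0 (Set.Ioi 0)) (nhds 0)
      ↔
    ∃ j : ℕ → ℕ, StrictMono j ∧ (∀ k, 1 ≤ j k) ∧
      Filter.Tendsto (fun k : ℕ => |a (j k)| * (j k : ℝ) ^ s) Filter.atTop (nhds 0) ∧
      Filter.Tendsto (fun k : ℕ => (j k : ℝ) / (k : ℝ)) Filter.atTop (nhds 1) := by
  have hfilter (δ : ℝ) (N : ℕ) :
      (Icc 1 N).filter (fun j : ℕ => δ * (j : ℝ) ^ (-s) < |a j|) =
      (Icc 1 N).filter (fun j : ℕ => δ < |a j| * (j : ℝ) ^ s) := by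
    refine filter_congr fun m hm => ?_
    have hm : (0 : ℝ) < m := by exact_mod_cast (mem_Icc.1 hm).1
    rw [Real.rpow_neg hm.le, ← div_eq_mul_inv, div_lt_iff₀ (by positivity)]
  have hnorm (m : ℕ) : ‖|a m| * (m : ℝ) ^ s‖ = |a m| * (m : ℝ) ^ s :=
    Real.norm_of_nonneg (by positivity)
  have key := (forall_hasNatDensity_lt_norm_iff fun m : ℕ => |a m| * (m : ℝ) ^ s).trans
    (exists_strictMono_tendsto_iff _ _)
  simp only [hnorm] at key
  simp only [hfilter]
  rw [tendsto_limsup_card_filter_iff]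
  exact key

/-- The density formulation of `a_j = o(j^{-s})` almost surely is equivalent to the
existence of a density-one subsequence along which `a_{j_k} = o(j_k^{-s})`. -/
theorem plasmon_stmt_1 (a : ℕ → ℝ) (s : ℝ) (hs : 0 ≤ s) :
    Filter.Tendsto
        (fun δ : ℝ =>
          Filter.limsup
            (fun N : ℕ =>
              (((Finset.Icc 1 N).filter
                  (fun j : ℕ => δ * (j : ℝ) ^ (-s) < |a j|)).card : ℝ) / N)
            Filter.atTop)
        (nhdsWithin 0 (Set.Ioi 0)) (nhds 0)
      ↔
    ∃ j : ℕ → ℕ, StrictMono j ∧ (∀ k, 1 ≤ j k) ∧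
      Filter.Tendsto (fun k : ℕ => |a (j k)| * (j k : ℝ) ^ s) Filter.atTop (nhds 0) ∧
      Filter.Tendsto (fun k : ℕ => (j k : ℝ) / (k : ℝ)) Filter.atTop (nhds 1) :=
  plasmon_stmt_1_general a s
end

section
/- Let (a_j) be a sequence of real numbers and δ, δ' > 0. If limsup_{N→∞} (#{j < N : |a_j| > δ j^{-1/2}})/N > δ', then there exist infinitely many disjoint blocks of indices, each contributing at least a fixed positive amount c = c(δ, δ') > 0 to ∑ |a_j|², and consequently ∑_{j=1}^∞ |a_j|² = ∞. -/
open Filter Finset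
open scoped Classical

/-- If the indices where `|a_j| > δ j^{-1/2}` have upper density exceeding `δ' > 0`,
then `∑ |a_j|² = ∞`. -/
theorem plasmon_stmt_2 (a : ℕ → ℝ) (δ δ' : ℝ) (hδ : 0 < δ) (hδ' : 0 < δ')
    (h : δ' <
      Filter.limsup
        (fun N : ℕ =>
          (((Finset.Icc 1 N).filter
              (fun j : ℕ => δ * (j : ℝ) ^ (-(1 / 2 : ℝ)) < |a j|)).card : ℝ) / N)
        Filter.atTop) :
    ¬ Summable (fun j => (a j) ^ 2) := by
  intro hs
  have hc : 0 < δ ^ 2 * δ' / 2 := by positivity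
  obtain ⟨s, hsv⟩ := hs.vanishing (Metric.ball_mem_nhds 0 hc)
  obtain ⟨M, hM⟩ : ∃ M : ℕ, ∀ i ∈ s, i < M :=
    ⟨s.sup id + 1, fun i hi => Nat.lt_succ_of_le (Finset.le_sup (f := id) hi)⟩
  obtain ⟨K, hK⟩ := exists_nat_ge (2 * M / δ')
  have hfreq : ∃ᶠ N in atTop, δ' < (((Finset.Icc 1 N).filter
      (fun j : ℕ => δ * (j : ℝ) ^ (-(1 / 2 : ℝ)) < |a j|)).card : ℝ) / N := by
    apply frequently_lt_of_lt_limsup _ h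
    exact Filter.isCoboundedUnder_le_of_le Filter.atTop (x := 0) (fun N => by positivity)
  obtain ⟨N, hNK, hN⟩ := Filter.frequently_atTop.mp hfreq (max (M + 1) K)
  have hNM : M + 1 ≤ N := le_trans (le_max_left _ _) hNK
  have hN0 : (0 : ℝ) < N := by
    have : 1 ≤ N := by omega
    exact_mod_cast Nat.lt_of_lt_of_le Nat.zero_lt_one this
  have hNKr : (2 * M / δ' : ℝ) ≤ N := le_trans hK (by exact_mod_cast le_trans (le_max_right _ _) hNK)
  have hMle : (M : ℝ) ≤ δ' * N / 2 := by
    rw [div_le_iff₀ hδ'] at hNKr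
    nlinarith
  set P : ℕ → Prop := fun j : ℕ => δ * (j : ℝ) ^ (-(1 / 2 : ℝ)) < |a j| with hP
  set F := (Finset.Icc 1 N).filter P with hF
  set t := (Finset.Icc (M + 1) N).filter P with ht
  have hdisj : Disjoint t s := by
    rw [Finset.disjoint_left]
    intro j hj hjs
    have h1 := (Finset.mem_Icc.mp (Finset.mem_filter.mp hj).1).1
    have h2 := hM j hjs
    omega
  have hsub : F ⊆ Finset.Icc 1 M ∪ t := by
    intro j hj
    obtain ⟨hj1, hj2⟩ := Finset.mem_filter.mp hj
    obtain ⟨hja, hjb⟩ := Finset.mem_Icc.mp hj1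
    rcases le_or_gt j M with hle | hlt
    · exact Finset.mem_union_left _ (Finset.mem_Icc.mpr ⟨hja, hle⟩)
    · exact Finset.mem_union_right _ (Finset.mem_filter.mpr ⟨Finset.mem_Icc.mpr ⟨hlt, hjb⟩, hj2⟩)
  have hcard1 : F.card ≤ M + t.card := by
    calc F.card ≤ (Finset.Icc 1 M ∪ t).card := Finset.card_le_card hsub
      _ ≤ (Finset.Icc 1 M).card + t.card := Finset.card_union_le _ _
      _ = M + t.card := by rw [Nat.card_Icc]; omega
  have hFcard : δ' * N < (F.card : ℝ) := (lt_div_iff₀ hN0).mp hN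
  have htcard : δ' * N / 2 ≤ (t.card : ℝ) := by
    have : (F.card : ℝ) ≤ M + t.card := by exact_mod_cast hcard1
    linarith
  have hlow : ∀ j ∈ t, δ ^ 2 / N ≤ a j ^ 2 := by
    intro j hj
    obtain ⟨hj1, hjP⟩ := Finset.mem_filter.mp hj
    obtain ⟨hja, hjb⟩ := Finset.mem_Icc.mp hj1
    have hj0 : (0 : ℝ) < j := by exact_mod_cast Nat.lt_of_lt_of_le Nat.zero_lt_one (by omega)
    have hrpow : (0 : ℝ) ≤ (j : ℝ) ^ (-(1 / 2 : ℝ)) := Real.rpow_nonneg hj0.le _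
    have hsq : (δ * (j : ℝ) ^ (-(1 / 2 : ℝ))) ^ 2 ≤ |a j| ^ 2 := by
      apply pow_le_pow_left₀ (by positivity) hjP.le
    have hjr : ((j : ℝ) ^ (-(1 / 2 : ℝ))) ^ 2 = (j : ℝ)⁻¹ := by
      rw [← Real.rpow_natCast ((j : ℝ) ^ (-(1 / 2 : ℝ))) 2, ← Real.rpow_mul hj0.le]
      norm_num [Real.rpow_neg_one]
    have hinv : δ ^ 2 / N ≤ δ ^ 2 * (j : ℝ)⁻¹ := by
      have h2 : δ ^ 2 / (N : ℝ) ≤ δ ^ 2 / (j : ℝ) :=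
        div_le_div_of_nonneg_left (by positivity) hj0 (by exact_mod_cast hjb)
      rwa [div_eq_mul_inv (δ ^ 2) (j : ℝ)] at h2
    calc δ ^ 2 / N ≤ δ ^ 2 * (j : ℝ)⁻¹ := hinv
      _ = (δ * (j : ℝ) ^ (-(1 / 2 : ℝ))) ^ 2 := by rw [mul_pow, hjr]
      _ ≤ |a j| ^ 2 := hsq
      _ = a j ^ 2 := sq_abs _
  have hsumlow : δ ^ 2 * δ' / 2 ≤ ∑ j ∈ t, a j ^ 2 := by
    have h1 : t.card • (δ ^ 2 / N) ≤ ∑ j ∈ t, a j ^ 2 := Finset.card_nsmul_le_sum t _ _ hlow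
    rw [nsmul_eq_mul] at h1
    have h2 : δ' * N / 2 * (δ ^ 2 / N) ≤ (t.card : ℝ) * (δ ^ 2 / N) := by
      apply mul_le_mul_of_nonneg_right htcard (by positivity)
    have h3 : δ' * N / 2 * (δ ^ 2 / N) = δ ^ 2 * δ' / 2 := by
      field_simp
    linarith
  have := hsv t hdisj
  rw [mem_ball_zero_iff, Real.norm_eq_abs] at this
  have := abs_lt.mp this
  linarith [this.2]
end
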